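/- The harmonic edit distance d defines a metric on the set of lists over a type α: it is symmetric, vanishes exactly on equal lists, and satisfies the triangle inequality. -/

import Mathlib

open List

noncomputable def H (n : ℕ) : ℝ := ∑ i ∈ Finset.range n, (1 : ℝ) / (i + 1)

noncomputable def lcsLen {α : Type*} (A B : List α) : ℕ :=
  sSup {n : ℕ | ∃ L : List α, L.Sublist A ∧ L.Sublist B ∧ L.length = n}

noncomputable def d {α : Type*} (A B : List α) : ℝ :=
  2 * H (A.length + B.length - lcsLen A B) - H A.length - H B.length

/-!
With `s = |A| + |B| - lcsLen A B` (the length of a shortest common supersequence),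
`d A B = (H s - H |A|) + (H s - H |B|)`, a sum of two nonnegative terms, both zero only when
`A` and `B` are both their longest common sublist. For the triangle inequality, two longest common
sublists of `A, B` and of `B, C` overlap inside `B` in at least `lcsLen A B + lcsLen B C - |B|`
letters, which bounds `s(A, C)` by `s(A, B) + s(B, C) - |B|`; the claim then follows from the
concavity of `H`: `H (b + s + t) - H (b + t) ≤ H (b + s) - H b`.
-/

lemma H_succ (n : ℕ) : H (n + 1) = H n + 1 / (n + 1) := by
  simp only [H, Finset.sum_range_succ]

lemma H_strictMono : StrictMono H :=
  strictMono_nat_of_lt_succ fun n => by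
    rw [H_succ]
    linarith [Nat.one_div_pos_of_nat (α := ℝ) (n := n)]

lemma H_add_add_le (b s t : ℕ) : H (b + s + t) + H b ≤ H (b + s) + H (b + t) := by
  induction s with
  | zero => simp only [add_zero, add_comm, le_refl]
  | succ s ih =>
    have hstep : (1 : ℝ) / (b + s + t + 1) ≤ 1 / (b + s + 1) :=
      one_div_le_one_div_of_le (by positivity) (by linarith [(t.cast_nonneg : (0 : ℝ) ≤ t)])
    rw [show b + (s + 1) + t = b + s + t + 1 by omega, ← add_assoc, H_succ, H_succ]
    push_cast
    linarith

section lcs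

variable {α : Type*}

lemma lcsLen_bddAbove (A B : List α) :
    BddAbove {n : ℕ | ∃ L : List α, L.Sublist A ∧ L.Sublist B ∧ L.length = n} :=
  ⟨A.length, fun _ ⟨_, hA, _, hn⟩ => hn ▸ hA.length_le⟩

lemma exists_common_sublist_length_eq_lcsLen (A B : List α) :
    ∃ L : List α, L.Sublist A ∧ L.Sublist B ∧ L.length = lcsLen A B := by
  refine Nat.sSup_mem ?_ (lcsLen_bddAbove A B)
  exact ⟨0, [], nil_sublist A, nil_sublist B, rfl⟩

lemma length_le_lcsLen {A B L : List α} (hA : L.Sublist A) (hB : L.Sublist B) :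
    L.length ≤ lcsLen A B :=
  le_csSup (lcsLen_bddAbove A B) ⟨L, hA, hB, rfl⟩

lemma lcsLen_le_length_left (A B : List α) : lcsLen A B ≤ A.length := by
  obtain ⟨L, hA, _, hL⟩ := exists_common_sublist_length_eq_lcsLen A B
  exact hL ▸ hA.length_le

lemma lcsLen_le_length_right (A B : List α) : lcsLen A B ≤ B.length := by
  obtain ⟨L, _, hB, hL⟩ := exists_common_sublist_length_eq_lcsLen A B
  exact hL ▸ hB.length_le

lemma lcsLen_comm (A B : List α) : lcsLen A B = lcsLen B A := by
  simp only [lcsLen, and_left_comm]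

lemma lcsLen_self (A : List α) : lcsLen A A = A.length :=
  (lcsLen_le_length_left A A).antisymm (length_le_lcsLen (Sublist.refl A) (Sublist.refl A))

lemma exists_common_sublist_of_sublist {L₁ L₂ B : List α} (h₁ : L₁.Sublist B)
    (h₂ : L₂.Sublist B) :
    ∃ L : List α, L.Sublist L₁ ∧ L.Sublist L₂ ∧
      L₁.length + L₂.length ≤ L.length + B.length := by
  induction B generalizing L₁ L₂ with
  | nil =>
    rw [sublist_nil] at h₁ h₂
    subst h₁ h₂
    exact ⟨[], Sublist.refl _, Sublist.refl _, le_rfl⟩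
  | cons b B ih =>
    cases h₁ with
    | cons _ h₁ =>
      cases h₂ with
      | cons _ h₂ =>
        obtain ⟨L, hL₁, hL₂, hlen⟩ := ih h₁ h₂
        exact ⟨L, hL₁, hL₂, by simp only [length_cons]; omega⟩
      | cons_cons _ h₂ =>
        obtain ⟨L, hL₁, hL₂, hlen⟩ := ih h₁ h₂
        exact ⟨L, hL₁, hL₂.cons b, by simp only [length_cons]; omega⟩
    | cons_cons _ h₁ =>
      cases h₂ with
      | cons _ h₂ =>
        obtain ⟨L, hL₁, hL₂, hlen⟩ := ih h₁ h₂
        exact ⟨L, hL₁.cons b, hL₂, by simp only [length_cons]; omega⟩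
      | cons_cons _ h₂ =>
        obtain ⟨L, hL₁, hL₂, hlen⟩ := ih h₁ h₂
        exact ⟨b :: L, hL₁.cons_cons b, hL₂.cons_cons b, by simp only [length_cons]; omega⟩

lemma lcsLen_add_lcsLen_le (A B C : List α) :
    lcsLen A B + lcsLen B C ≤ lcsLen A C + B.length := by
  obtain ⟨L₁, h₁A, h₁B, h₁⟩ := exists_common_sublist_length_eq_lcsLen A B
  obtain ⟨L₂, h₂B, h₂C, h₂⟩ := exists_common_sublist_length_eq_lcsLen B C
  obtain ⟨L, hL₁, hL₂, hlen⟩ := exists_common_sublist_of_sublist h₁B h₂B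
  have := length_le_lcsLen (hL₁.trans h₁A) (hL₂.trans h₂C)
  omega

end lcs

section metric

variable {α : Type*}

lemma d_comm (A B : List α) : d A B = d B A := by
  rw [d, d, lcsLen_comm, Nat.add_comm A.length]
  ring

lemma d_self (A : List α) : d A A = 0 := by
  rw [d, lcsLen_self, Nat.add_sub_cancel]
  ring

lemma eq_of_d_eq_zero {A B : List α} (h : d A B = 0) : A = B := by
  rw [d] at h
  have hA := lcsLen_le_length_left A B
  have hB := lcsLen_le_length_right A B
  set s := A.length + B.length - lcsLen A B
  have hsA : H A.length ≤ H s := H_strictMono.monotone (by omega)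
  have hsB : H B.length ≤ H s := H_strictMono.monotone (by omega)
  have eqA : s = A.length := H_strictMono.injective (by linarith)
  have eqB : s = B.length := H_strictMono.injective (by linarith)
  obtain ⟨L, hLA, hLB, hL⟩ := exists_common_sublist_length_eq_lcsLen A B
  rw [← hLA.eq_of_length (by omega), hLB.eq_of_length (by omega)]

lemma d_eq_zero_iff {A B : List α} : d A B = 0 ↔ A = B :=
  ⟨eq_of_d_eq_zero, fun h => h ▸ d_self A⟩

lemma d_triangle (A B C : List α) : d A C ≤ d A B + d B C := by
  have := lcsLen_le_length_left A B
  have := lcsLen_le_length_right B C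
  have := lcsLen_add_lcsLen_le A B C
  set s := A.length - lcsLen A B
  set t := C.length - lcsLen B C
  have hAC : H (A.length + C.length - lcsLen A C) ≤ H (B.length + s + t) :=
    H_strictMono.monotone (by omega)
  have hAB : A.length + B.length - lcsLen A B = B.length + s := by omega
  have hBC : B.length + C.length - lcsLen B C = B.length + t := by omega
  have := H_add_add_le B.length s t
  simp only [d, hAB, hBC]
  linarith

end metric

theorem stmt14 {α : Type*} :
    (∀ A B : List α, d A B = d B A) ∧
    (∀ A B : List α, d A B = 0 ↔ A = B) ∧
    (∀ A B C : List α, d A C ≤ d A B + d B C) :=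
  ⟨d_comm, fun _ _ => d_eq_zero_iff, d_triangle⟩
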